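/- Let G be a connected simple graph with all vertex degrees bounded by a constant M ≥ 1, and fix a vertex n₀. Then the function f_{n₀}(n) := M^{−1/2} · d(n₀, n) (with d the graph distance) is admissible, i.e. Σ_{j adjacent to i} (f_{n₀}(j) − f_{n₀}(i))² ≤ 1 for every vertex i; consequently, for all vertices n, n' the Connes distance satisfies the lower bound dist_C(n, n') ≥ M^{−1/2} · d(n, n'). -/
import Mathlib


/-- A vertex function `f` is admissible for `G` if `∑_{j ~ i} (f j - f i)² ≤ 1` at every
vertex `i`. -/
def Admissible {V : Type*} (G : SimpleGraph V) [∀ v, Fintype (G.neighborSet v)]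
    (f : V → ℝ) : Prop :=
  ∀ i : V, ∑ j ∈ G.neighborFinset i, (f j - f i) ^ 2 ≤ 1

/-- The Connes distance: the supremum of `|f n' - f n|` over admissible functions `f`. -/
noncomputable def distC {V : Type*} (G : SimpleGraph V) [∀ v, Fintype (G.neighborSet v)]
    (n n' : V) : ℝ :=
  sSup {r : ℝ | ∃ f : V → ℝ, Admissible G f ∧ r = |f n' - f n|}

lemma admissible_step {V : Type*} (G : SimpleGraph V) [∀ v, Fintype (G.neighborSet v)]
    {f : V → ℝ} (hf : Admissible G f) {i j : V} (hij : G.Adj i j) : |f j - f i| ≤ 1 := by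
  rw [← sq_le_one_iff_abs_le_one]
  have hmem : j ∈ G.neighborFinset i := by rwa [SimpleGraph.mem_neighborFinset]
  exact le_trans (Finset.single_le_sum (f := fun k => (f k - f i) ^ 2)
    (fun k _ => sq_nonneg _) hmem) (hf i)

lemma admissible_walk {V : Type*} (G : SimpleGraph V) [∀ v, Fintype (G.neighborSet v)]
    {f : V → ℝ} (hf : Admissible G f) {n n' : V} (p : G.Walk n n') :
    |f n' - f n| ≤ (p.length : ℝ) := by
  induction p with
  | nil => simp
  | @cons u v w h q ih =>
    have h1 : |f w - f u| ≤ |f w - f v| + |f v - f u| := abs_sub_le _ _ _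
    have h2 : |f v - f u| ≤ 1 := admissible_step G hf h
    have := add_le_add ih h2
    rw [SimpleGraph.Walk.length_cons]
    push_cast
    linarith

/-- In a connected simple graph with all degrees at most `M ≥ 1`, the function
`n ↦ M^{-1/2} d(n₀, n)` is admissible; consequently
`dist_C(n, n') ≥ M^{-1/2} d(n, n')` for all vertices `n, n'`. -/
theorem stmt_12 {V : Type*} (G : SimpleGraph V) [∀ v, Fintype (G.neighborSet v)]
    (hG : G.Connected) (M : ℝ) (hM : 1 ≤ M) (hdeg : ∀ v, (G.degree v : ℝ) ≤ M) (n₀ : V) :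
    Admissible G (fun n => (Real.sqrt M)⁻¹ * (G.dist n₀ n : ℝ)) ∧
      ∀ n n' : V, (Real.sqrt M)⁻¹ * (G.dist n n' : ℝ) ≤ distC G n n' := by
  have hM0 : (0:ℝ) < M := lt_of_lt_of_le one_pos hM
  have hsq : Real.sqrt M ^ 2 = M := Real.sq_sqrt hM0.le
  have hadm : ∀ m₀ : V, Admissible G (fun n => (Real.sqrt M)⁻¹ * (G.dist m₀ n : ℝ)) := by
    intro m₀ i
    have hterm : ∀ j ∈ G.neighborFinset i,
        ((Real.sqrt M)⁻¹ * (G.dist m₀ j : ℝ) - (Real.sqrt M)⁻¹ * (G.dist m₀ i : ℝ)) ^ 2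
          ≤ M⁻¹ := by
      intro j hj
      rw [SimpleGraph.mem_neighborFinset] at hj
      have hdij : G.dist i j = 1 := SimpleGraph.dist_eq_one_iff_adj.2 hj
      have hdji : G.dist j i = 1 := SimpleGraph.dist_eq_one_iff_adj.2 hj.symm
      have h1 : G.dist m₀ j ≤ G.dist m₀ i + 1 := by
        have := hG.dist_triangle (u := m₀) (v := i) (w := j); omega
      have h2 : G.dist m₀ i ≤ G.dist m₀ j + 1 := by
        have := hG.dist_triangle (u := m₀) (v := j) (w := i); omega
      have c1 : (G.dist m₀ j : ℝ) ≤ (G.dist m₀ i : ℝ) + 1 := by exact_mod_cast h1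
      have c2 : (G.dist m₀ i : ℝ) ≤ (G.dist m₀ j : ℝ) + 1 := by exact_mod_cast h2
      have habs : |(G.dist m₀ j : ℝ) - (G.dist m₀ i : ℝ)| ≤ 1 := by
        rw [abs_sub_le_iff]; constructor <;> linarith
      have hsq1 : ((G.dist m₀ j : ℝ) - (G.dist m₀ i : ℝ)) ^ 2 ≤ 1 := by
        rw [sq_le_one_iff_abs_le_one]; exact habs
      calc ((Real.sqrt M)⁻¹ * (G.dist m₀ j : ℝ) - (Real.sqrt M)⁻¹ * (G.dist m₀ i : ℝ)) ^ 2
          = ((Real.sqrt M)⁻¹)^2 * ((G.dist m₀ j : ℝ) - (G.dist m₀ i : ℝ))^2 := by ring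
        _ ≤ ((Real.sqrt M)⁻¹)^2 * 1 := by
            apply mul_le_mul_of_nonneg_left hsq1 (sq_nonneg _)
        _ = M⁻¹ := by rw [mul_one, inv_pow, hsq]
    show ∑ j ∈ G.neighborFinset i,
        ((Real.sqrt M)⁻¹ * (G.dist m₀ j : ℝ) - (Real.sqrt M)⁻¹ * (G.dist m₀ i : ℝ)) ^ 2 ≤ 1
    calc ∑ j ∈ G.neighborFinset i,
          ((Real.sqrt M)⁻¹ * (G.dist m₀ j : ℝ) - (Real.sqrt M)⁻¹ * (G.dist m₀ i : ℝ)) ^ 2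
        ≤ ∑ _j ∈ G.neighborFinset i, M⁻¹ := Finset.sum_le_sum hterm
      _ = (G.degree i : ℝ) * M⁻¹ := by
          rw [Finset.sum_const, nsmul_eq_mul, SimpleGraph.card_neighborFinset_eq_degree]
      _ ≤ M * M⁻¹ := by
          apply mul_le_mul_of_nonneg_right (hdeg i) (by positivity)
      _ = 1 := mul_inv_cancel₀ hM0.ne'
  refine ⟨hadm n₀, fun n n' => ?_⟩
  have hbdd : BddAbove {r : ℝ | ∃ f : V → ℝ, Admissible G f ∧ r = |f n' - f n|} := by
    refine ⟨(G.dist n n' : ℝ), fun r hr => ?_⟩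
    obtain ⟨f, hf, rfl⟩ := hr
    obtain ⟨p, hp⟩ := (hG n n').exists_walk_length_eq_dist
    have := admissible_walk G hf p
    rwa [hp] at this
  have hmem : (Real.sqrt M)⁻¹ * (G.dist n n' : ℝ) ∈
      {r : ℝ | ∃ f : V → ℝ, Admissible G f ∧ r = |f n' - f n|} := by
    refine ⟨fun m => (Real.sqrt M)⁻¹ * (G.dist n m : ℝ), hadm n, ?_⟩
    simp only [SimpleGraph.dist_self, Nat.cast_zero, mul_zero, sub_zero]
    rw [abs_of_nonneg (by positivity)]
  exact le_csSup hbdd hmem
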